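/- arXiv:1909.04284 — 2 statements merged into one kernel-verified Lean document; each statement's English description precedes it below -/
import Mathlib

section
/- Let p ≥ 3 be a prime and k ≥ 1 a natural number. If a ∈ 𝓔_p satisfies |a − 1|_p ≥ |k|_p, then |x^k − a|_p ≥ |a − 1|_p for every x ∈ ℚ_p. -/
/-!
If `‖x ^ k - 1‖ ≥ 1 > ‖a - 1‖`, the ultrametric inequality gives the claim. Otherwise `x` is a
unit whose residue has order dividing `g = gcd k (p - 1)`, so `x ^ g ∈ 1 + pℤ_p`. On `1 + pℤ_p`
the geometric sum yields `‖u ^ n - 1‖ ≤ ‖n‖ * ‖u - 1‖`, and as `‖g‖ = 1` this gives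
`‖x ^ k - 1‖ ≤ ‖k‖ / p < ‖a - 1‖`. Either way `‖x ^ k - 1‖ ≠ ‖a - 1‖`, so
`‖x ^ k - a‖ = max ‖x ^ k - 1‖ ‖a - 1‖`.
-/

open Finset IsUltrametricDist

section Ultrametric

variable {R : Type*} [NormedRing R] [IsUltrametricDist R]

lemma norm_pow_sub_one_le_norm_sub_one {u : R} (hu : ‖u‖ ≤ 1) (n : ℕ) :
    ‖u ^ n - 1‖ ≤ ‖u - 1‖ := by
  induction n with
  | zero => simp
  | succ n ih =>
    have hsplit : u ^ (n + 1) - 1 = u * (u ^ n - 1) + (u - 1) := by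
      rw [pow_succ', mul_sub, mul_one, sub_add_sub_cancel]
    rw [hsplit]
    refine (norm_add_le_max _ _).trans (max_le ?_ le_rfl)
    calc ‖u * (u ^ n - 1)‖ ≤ ‖u‖ * ‖u ^ n - 1‖ := norm_mul_le _ _
      _ ≤ 1 * ‖u - 1‖ := by gcongr
      _ = ‖u - 1‖ := one_mul _

lemma norm_geom_sum_le_max {u : R} (hu : ‖u‖ ≤ 1) (n : ℕ) :
    ‖∑ i ∈ range n, u ^ i‖ ≤ max ‖(n : R)‖ ‖u - 1‖ := by
  have hsplit : ∑ i ∈ range n, u ^ i = n + ∑ i ∈ range n, (u ^ i - 1) := by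
    simp [sum_sub_distrib]
  rw [hsplit]
  refine (norm_add_le_max _ _).trans (max_le_max le_rfl ?_)
  exact norm_sum_le_of_forall_le_of_nonneg (norm_nonneg _)
    fun i _ => norm_pow_sub_one_le_norm_sub_one hu i

lemma norm_pow_sub_one_le_max_mul {u : R} (hu : ‖u‖ ≤ 1) (n : ℕ) :
    ‖u ^ n - 1‖ ≤ max ‖(n : R)‖ ‖u - 1‖ * ‖u - 1‖ := by
  rw [← geom_sum_mul]
  exact (norm_mul_le _ _).trans (by gcongr; exact norm_geom_sum_le_max hu n)

lemma norm_le_one_of_norm_sub_one_le_one [NormOneClass R] {u : R} (hu : ‖u - 1‖ ≤ 1) :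
    ‖u‖ ≤ 1 := by
  simpa [hu] using norm_add_one_le_max_norm_one (u - 1)

end Ultrametric

section

variable {p : ℕ} [hp : Fact p.Prime]

namespace PadicInt

lemma norm_sub_one_lt_one_iff {x : ℤ_[p]} : ‖x - 1‖ < 1 ↔ toZMod x = 1 := by
  rw [norm_lt_one_iff_dvd, ← Ideal.mem_span_singleton, ← maximalIdeal_eq_span_p,
    ← ker_toZMod, RingHom.mem_ker, map_sub, map_one, sub_eq_zero]

lemma norm_pow_gcd_sub_one_lt_one {x : ℤ_[p]} {k : ℕ} (hk : k ≠ 0) (hx : ‖x ^ k - 1‖ < 1) :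
    ‖x ^ k.gcd (p - 1) - 1‖ < 1 := by
  rw [norm_sub_one_lt_one_iff, map_pow] at hx ⊢
  have hx0 : toZMod x ≠ 0 := fun h => by simp [h, hk] at hx
  exact pow_gcd_eq_one.2 ⟨hx, ZMod.pow_card_sub_one_eq_one hx0⟩

end PadicInt

namespace Padic

lemma norm_le_inv_of_norm_lt_one {x : ℚ_[p]} (hx : ‖x‖ < 1) : ‖x‖ ≤ (p : ℝ)⁻¹ := by
  simpa using (norm_le_pow_iff_norm_lt_pow_add_one x (-1)).2 (by simpa using hx)

lemma inv_le_norm_natCast_of_prime {q : ℕ} (hq : q.Prime) : (p : ℝ)⁻¹ ≤ ‖(q : ℚ_[p])‖ := by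
  rcases eq_or_ne p q with rfl | hpq
  · rw [norm_p]
  · rw [norm_natCast_eq_one_iff.2 ((Nat.coprime_primes hp.out hq).2 hpq)]
    exact inv_le_one_of_one_le₀ (mod_cast hp.out.one_le)

lemma norm_pow_prime_sub_one_le {u : ℚ_[p]} (hu : ‖u - 1‖ < 1) {q : ℕ} (hq : q.Prime) :
    ‖u ^ q - 1‖ ≤ ‖(q : ℚ_[p])‖ * ‖u - 1‖ := by
  have hq_max : max ‖(q : ℚ_[p])‖ ‖u - 1‖ = ‖(q : ℚ_[p])‖ :=
    max_eq_left ((norm_le_inv_of_norm_lt_one hu).trans (inv_le_norm_natCast_of_prime hq))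
  simpa [hq_max] using
    norm_pow_sub_one_le_max_mul (norm_le_one_of_norm_sub_one_le_one hu.le) q

lemma norm_pow_sub_one_le {u : ℚ_[p]} (hu : ‖u - 1‖ < 1) (n : ℕ) :
    ‖u ^ n - 1‖ ≤ ‖(n : ℚ_[p])‖ * ‖u - 1‖ := by
  induction n using induction_on_primes generalizing u with
  | zero => simp
  | one => simp
  | prime_mul q n hq ih =>
    have hq_le := norm_pow_prime_sub_one_le hu hq
    have huq : ‖u ^ q - 1‖ < 1 :=
      (hq_le.trans (mul_le_of_le_one_left (norm_nonneg _) (norm_natCast_le_one _ _))).trans_lt hu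
    calc ‖u ^ (q * n) - 1‖ = ‖(u ^ q) ^ n - 1‖ := by rw [pow_mul]
      _ ≤ ‖(n : ℚ_[p])‖ * ‖u ^ q - 1‖ := ih huq
      _ ≤ ‖(n : ℚ_[p])‖ * (‖(q : ℚ_[p])‖ * ‖u - 1‖) := by gcongr
      _ = ‖((q * n : ℕ) : ℚ_[p])‖ * ‖u - 1‖ := by push_cast; rw [norm_mul]; ring

end Padic


namespace Padic

lemma norm_pow_sub_one_le_of_lt_one {x : ℚ_[p]} {k : ℕ} (hx : ‖x ^ k - 1‖ < 1) :
    ‖x ^ k - 1‖ ≤ ‖(k : ℚ_[p])‖ * (p : ℝ)⁻¹ := by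
  rcases eq_or_ne k 0 with rfl | hk
  · simp
  have hx1 : ‖x‖ ≤ 1 := by
    have := norm_le_one_of_norm_sub_one_le_one hx.le
    rwa [norm_pow, pow_le_one_iff_of_nonneg (norm_nonneg _) hk] at this
  set g := k.gcd (p - 1)
  have hg : ‖x ^ g - 1‖ < 1 := by
    let X : ℤ_[p] := ⟨x, hx1⟩
    have hX : ‖X ^ k - 1‖ < 1 := by rw [PadicInt.norm_def]; push_cast; exact hx
    have := PadicInt.norm_pow_gcd_sub_one_lt_one hk hX
    rwa [PadicInt.norm_def, PadicInt.coe_sub, PadicInt.coe_pow, PadicInt.coe_one] at this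
  have hg_norm : ‖(g : ℚ_[p])‖ = 1 := by
    refine norm_natCast_eq_one_iff.2 (Nat.Coprime.coprime_dvd_right (Nat.gcd_dvd_right _ _) ?_)
    exact (Nat.coprime_self_sub_right hp.out.one_le).2 (Nat.coprime_one_right _)
  obtain ⟨m, hkm⟩ := Nat.gcd_dvd_left k (p - 1)
  calc ‖x ^ k - 1‖ = ‖(x ^ g) ^ m - 1‖ := by rw [← pow_mul, ← hkm]
    _ ≤ ‖(m : ℚ_[p])‖ * ‖x ^ g - 1‖ := norm_pow_sub_one_le hg m
    _ ≤ ‖(m : ℚ_[p])‖ * (p : ℝ)⁻¹ := by gcongr; exact norm_le_inv_of_norm_lt_one hg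
    _ = ‖(k : ℚ_[p])‖ * (p : ℝ)⁻¹ := by rw [hkm, Nat.cast_mul, norm_mul, hg_norm, one_mul]

end Padic

end

theorem stmt4_general (p : ℕ) [Fact p.Prime] (k : ℕ)
    (a : ℚ_[p]) (ha : ‖a - 1‖ < 1) (hak : ‖a - 1‖ ≥ ‖(k : ℚ_[p])‖) :
    ∀ x : ℚ_[p], ‖x ^ k - a‖ ≥ ‖a - 1‖ := by
  intro x
  rcases eq_or_ne a 1 with rfl | ha1
  · simp
  have hne : ‖x ^ k - 1‖ ≠ ‖1 - a‖ := by
    rw [norm_sub_rev 1 a]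
    rcases lt_or_ge ‖x ^ k - 1‖ 1 with hsmall | hlarge
    · have hp_inv : (p : ℝ)⁻¹ < 1 :=
        inv_lt_one_of_one_lt₀ (by exact_mod_cast (Fact.out : p.Prime).one_lt)
      refine ne_of_lt ?_
      calc ‖x ^ k - 1‖ ≤ ‖(k : ℚ_[p])‖ * (p : ℝ)⁻¹ := Padic.norm_pow_sub_one_le_of_lt_one hsmall
        _ ≤ ‖a - 1‖ * (p : ℝ)⁻¹ := by gcongr
        _ < ‖a - 1‖ := mul_lt_of_lt_one_right (norm_pos_iff.2 (sub_ne_zero.2 ha1)) hp_inv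
    · exact (ha.trans_le hlarge).ne'
  rw [norm_sub_eq_max_of_norm_sub_ne_norm_sub _ _ _ hne, norm_sub_rev 1 a]
  exact le_max_right _ _

theorem stmt4 (p : ℕ) [Fact p.Prime] (hp : 3 ≤ p) (k : ℕ) (hk : 1 ≤ k)
    (a : ℚ_[p]) (ha : ‖a - 1‖ < 1) (hak : ‖a - 1‖ ≥ ‖(k : ℚ_[p])‖) :
    ∀ x : ℚ_[p], ‖x ^ k - a‖ ≥ ‖a - 1‖ :=
  stmt4_general p k a ha hak
end

section
/- Let p ≥ 3 be a prime, let q, k ≥ 1 be natural numbers and θ ∈ ℚ_p with |q|_p < |k|_p and |θ − 1|_p < |q|_p². Let x₁ := 1 − q + (k−1)·(1 − q/2 + (k−2)·q²/(6k))·(θ−1) and r := |q·(θ−1)|_p. Then for all x, y in the ball B_r(x₁) one has |f(x) − f(y)|_p · |k·(θ−1)|_p = |q|_p · |x − y|_p (i.e. f expands distances on B_r(x₁) by the factor |q|_p/(|k|_p·|θ−1|_p)). -/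
/-!
Write `pottsBethe = M ^ k` with `M` the Möbius map `z ↦ (θ z + q - 1) / (z + θ + q - 2)`. The
centre is `1 - q + A (θ - 1)` with `‖A + 1‖ = ‖k‖`, hence on the ball the denominator of `M` has
norm `‖k‖ ‖θ - 1‖` and `‖z - 1‖ = ‖q‖`, so `‖M z - 1‖ = ‖q‖ / ‖k‖ ≤ p⁻¹` and `M` multiplies
distances by `‖q‖ / (‖k‖ ‖θ - 1‖) ^ 2`. For `‖a - 1‖, ‖b - 1‖ ≤ p⁻¹` and `p ≥ 3` the binomial
expansion of `a ^ k - b ^ k` is dominated by its linear term `k (a - b)`, so the `k`-th power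
multiplies distances by exactly `‖k‖`.
-/

open Finset

/-- The Potts–Bethe mapping on `ℚ_[p]` (with total division, so defined everywhere). -/
noncomputable def pottsBethe (p : ℕ) [Fact p.Prime] (q k : ℕ) (θ : ℚ_[p]) : ℚ_[p] → ℚ_[p] :=
  fun x => ((θ * x + (q : ℚ_[p]) - 1) / (x + θ + (q : ℚ_[p]) - 2)) ^ k

section Ultrametric

variable {E : Type*} [SeminormedAddCommGroup E] [IsUltrametricDist E]

theorem norm_add_eq_left_of_norm_lt {a b : E} (h : ‖b‖ < ‖a‖) : ‖a + b‖ = ‖a‖ := by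
  rw [IsUltrametricDist.norm_add_eq_max_of_norm_ne_norm h.ne', max_eq_left h.le]

theorem norm_sum_eq_of_forall_ne_lt {ι : Type*} [DecidableEq ι] {s : Finset ι} {f : ι → E}
    {i : ι} (hi : i ∈ s) (h : ∀ j ∈ s, j ≠ i → ‖f j‖ < ‖f i‖) : ‖∑ j ∈ s, f j‖ = ‖f i‖ := by
  rw [← add_sum_erase s f hi]
  rcases (s.erase i).eq_empty_or_nonempty with hs | hs
  · simp [hs]
  obtain ⟨j, hj, hle⟩ := IsUltrametricDist.exists_norm_finsetSum_le_of_nonempty hs f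
  exact norm_add_eq_left_of_norm_lt <|
    hle.trans_lt <| h j (mem_of_mem_erase hj) (ne_of_mem_erase hj)

variable {R : Type*} [SeminormedCommRing R] [NormOneClass R] [IsUltrametricDist R]

theorem norm_pow_succ_sub_pow_succ_le {u v : R} {c : ℝ} (hu : ‖u‖ ≤ c) (hv : ‖v‖ ≤ c) (n : ℕ) :
    ‖u ^ (n + 1) - v ^ (n + 1)‖ ≤ c ^ n * ‖u - v‖ := by
  have hc : 0 ≤ c := (norm_nonneg u).trans hu
  rw [← geom_sum₂_mul]
  refine (norm_mul_le _ _).trans (mul_le_mul_of_nonneg_right ?_ (norm_nonneg _))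
  refine IsUltrametricDist.norm_sum_le_of_forall_le_of_nonneg (pow_nonneg hc n) fun j hj => ?_
  have hj : j ≤ n := Nat.lt_succ_iff.mp (mem_range.mp hj)
  calc ‖u ^ j * v ^ (n + 1 - 1 - j)‖ ≤ c ^ j * c ^ (n - j) := by
        refine (norm_mul_le _ _).trans (mul_le_mul ?_ ?_ (norm_nonneg _) (pow_nonneg hc j))
        · exact (norm_pow_le _ _).trans (pow_le_pow_left₀ (norm_nonneg u) hu j)
        · rw [Nat.add_sub_cancel]
          exact (norm_pow_le _ _).trans (pow_le_pow_left₀ (norm_nonneg v) hv _)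
    _ = c ^ n := by rw [← pow_add, Nat.add_sub_cancel' hj]

theorem norm_choose_succ_mul_le [NormMulClass R] (n j : ℕ) :
    ‖(n.choose (j + 1) : R)‖ * ‖((j + 1 : ℕ) : R)‖ ≤ ‖(n : R)‖ := by
  cases n with
  | zero => simp
  | succ m =>
    rw [← norm_mul, ← Nat.cast_mul, ← Nat.add_one_mul_choose_eq, Nat.cast_mul, norm_mul]
    exact mul_le_of_le_one_right (norm_nonneg _) (IsUltrametricDist.norm_natCast_le_one R _)

end Ultrametric

namespace Padic

variable {p : ℕ} [Fact p.Prime]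

theorem norm_le_inv_mul_of_norm_lt {a b : ℚ_[p]} (h : ‖a‖ < ‖b‖) : ‖a‖ ≤ (p : ℝ)⁻¹ * ‖b‖ := by
  rcases eq_or_ne a 0 with rfl | ha
  · simp only [norm_zero]
    positivity
  have hp₀ : (0 : ℝ) < p := Nat.cast_pos.mpr (Fact.out : p.Prime).pos
  rw [norm_eq_zpow_neg_valuation ha] at h ⊢
  have := (norm_le_pow_iff_norm_lt_pow_add_one b (-a.valuation)).not.mp h.not_ge
  rwa [not_lt, zpow_add_one₀ hp₀.ne', ← le_inv_mul_iff₀' hp₀] at this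

theorem inv_le_norm_natCast {n : ℕ} (hn : n ≠ 0) : (n : ℝ)⁻¹ ≤ ‖(n : ℚ_[p])‖ := by
  rw [norm_eq_zpow_neg_valuation (Nat.cast_ne_zero.mpr hn), valuation_natCast, zpow_neg,
    zpow_natCast]
  refine inv_anti₀ (pow_pos (Nat.cast_pos.mpr (Fact.out : p.Prime).pos) _) ?_
  exact_mod_cast Nat.le_of_dvd (Nat.pos_of_ne_zero hn) pow_padicValNat_dvd

theorem inv_pow_lt_norm_natCast (hp : 3 ≤ p) (n : ℕ) :
    (p : ℝ)⁻¹ ^ (n + 1) < ‖((n + 2 : ℕ) : ℚ_[p])‖ := by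
  have hlt : n + 2 < p ^ (n + 1) :=
    calc n + 2 ≤ 2 ^ (n + 1) := Nat.lt_two_pow_self
      _ < p ^ (n + 1) := Nat.pow_lt_pow_left (by omega) n.succ_ne_zero
  calc (p : ℝ)⁻¹ ^ (n + 1) = ((p ^ (n + 1) : ℕ) : ℝ)⁻¹ := by push_cast; rw [inv_pow]
    _ < ((n + 2 : ℕ) : ℝ)⁻¹ := inv_strictAnti₀ (by positivity) (by exact_mod_cast hlt)
    _ ≤ _ := inv_le_norm_natCast (by omega)

theorem norm_pow_sub_pow_of_norm_sub_one_le (hp : 3 ≤ p) {a b : ℚ_[p]} (ha : ‖a - 1‖ ≤ (p : ℝ)⁻¹)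
    (hb : ‖b - 1‖ ≤ (p : ℝ)⁻¹) (k : ℕ) : ‖a ^ k - b ^ k‖ = ‖(k : ℚ_[p])‖ * ‖a - b‖ := by
  rcases eq_or_ne k 0 with rfl | hk
  · simp
  rcases eq_or_ne a b with rfl | hab
  · simp
  obtain ⟨u, rfl⟩ : ∃ u, a = 1 + u := ⟨a - 1, by ring⟩
  obtain ⟨v, rfl⟩ : ∃ v, b = 1 + v := ⟨b - 1, by ring⟩
  rw [add_sub_cancel_left] at ha hb
  rw [Ne, add_right_inj] at hab
  rw [add_sub_add_left_eq_sub]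
  have hk₀ : 0 < ‖(k : ℚ_[p])‖ := norm_pos_iff.mpr (Nat.cast_ne_zero.mpr hk)
  have huv₀ : 0 < ‖u - v‖ := norm_pos_iff.mpr (sub_ne_zero.mpr hab)
  have hexpand :
      (1 + u) ^ k - (1 + v) ^ k = ∑ j ∈ range (k + 1), (u ^ j - v ^ j) * k.choose j := by
    rw [add_comm 1 u, add_comm 1 v, add_pow, add_pow, ← sum_sub_distrib]
    simp only [one_pow, mul_one, sub_mul]
  -- the terms with `j ≥ 2` are small because `‖k.choose j‖ ≤ ‖k‖ / ‖j‖` and `p ^ (1 - j) < ‖j‖`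
  have hchoose (i : ℕ) : ‖(k.choose (i + 2) : ℚ_[p])‖ * (p : ℝ)⁻¹ ^ (i + 1) < ‖(k : ℚ_[p])‖ := by
    rcases eq_or_ne (k.choose (i + 2) : ℚ_[p]) 0 with h | h
    · simpa [h] using hk₀
    calc _ < ‖(k.choose (i + 2) : ℚ_[p])‖ * ‖((i + 2 : ℕ) : ℚ_[p])‖ :=
          mul_lt_mul_of_pos_left (inv_pow_lt_norm_natCast hp i) (norm_pos_iff.mpr h)
      _ ≤ _ := norm_choose_succ_mul_le k (i + 1)
  rw [hexpand, norm_sum_eq_of_forall_ne_lt (i := 1) (mem_range.mpr (by omega))]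
  · simp only [pow_one, Nat.choose_one_right, norm_mul, mul_comm]
  rintro (_ | _ | i) - hj
  · simpa using mul_pos huv₀ hk₀
  · contradiction
  calc ‖(u ^ (i + 2) - v ^ (i + 2)) * k.choose (i + 2)‖
      ≤ (p : ℝ)⁻¹ ^ (i + 1) * ‖u - v‖ * ‖(k.choose (i + 2) : ℚ_[p])‖ := by
        rw [norm_mul]
        exact mul_le_mul_of_nonneg_right (norm_pow_succ_sub_pow_succ_le ha hb _) (norm_nonneg _)
    _ = ‖(k.choose (i + 2) : ℚ_[p])‖ * (p : ℝ)⁻¹ ^ (i + 1) * ‖u - v‖ := by ring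
    _ < ‖(k : ℚ_[p])‖ * ‖u - v‖ := mul_lt_mul_of_pos_right (hchoose i) huv₀
    _ = _ := by simp only [pow_one, Nat.choose_one_right, norm_mul, mul_comm]

end Padic

section Mobius

variable {F : Type*} [Field F] {q : ℕ} {θ x y : F}

def pottsBetheMobius (q : ℕ) (θ x : F) : F := (θ * x + q - 1) / (x + θ + q - 2)

theorem pottsBetheMobius_sub_one (hx : x + θ + q - 2 ≠ 0) :
    pottsBetheMobius q θ x - 1 = (θ - 1) * (x - 1) / (x + θ + q - 2) := by
  rw [pottsBetheMobius, div_sub_one hx]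
  congr 1
  ring

theorem pottsBetheMobius_sub (hx : x + θ + q - 2 ≠ 0) (hy : y + θ + q - 2 ≠ 0) :
    pottsBetheMobius q θ x - pottsBetheMobius q θ y =
      (θ - 1) * (q + (θ - 1)) * (x - y) / ((x + θ + q - 2) * (y + θ + q - 2)) := by
  rw [pottsBetheMobius, pottsBetheMobius, div_sub_div _ _ hx hy]
  congr 1
  ring

def pottsBetheCenterCoeff (q k : ℕ) : F := (k - 1) * (1 - q / 2 + (k - 2) * q ^ 2 / (6 * k))

end Mobius

theorem pottsBethe_eq_pow (p : ℕ) [Fact p.Prime] (q k : ℕ) (θ x : ℚ_[p]) :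
    pottsBethe p q k θ x = pottsBetheMobius q θ x ^ k :=
  rfl

section Expansion

variable {p : ℕ} [Fact p.Prime] {q k : ℕ} {θ A z : ℚ_[p]}

theorem norm_add_add_sub_two_of_mem_ball (hqk : ‖(q : ℚ_[p])‖ < ‖(k : ℚ_[p])‖)
    (hA : ‖A + 1‖ = ‖(k : ℚ_[p])‖) (hz : ‖z - (1 - q + A * (θ - 1))‖ < ‖(q : ℚ_[p]) * (θ - 1)‖) :
    ‖z + θ + q - 2‖ = ‖(k : ℚ_[p])‖ * ‖θ - 1‖ := by
  have hz' : ‖z - (1 - q + A * (θ - 1))‖ < ‖(k : ℚ_[p])‖ * ‖θ - 1‖ := by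
    rw [norm_mul] at hz
    exact hz.trans_le (mul_le_mul_of_nonneg_right hqk.le (norm_nonneg _))
  rw [show z + θ + q - 2 = (A + 1) * (θ - 1) + (z - (1 - q + A * (θ - 1))) by ring,
    norm_add_eq_left_of_norm_lt] <;> rw [norm_mul, hA]
  exact hz'

theorem norm_sub_one_of_mem_ball (hθ : ‖θ - 1‖ < ‖(q : ℚ_[p])‖)
    (hA : ‖A + 1‖ = ‖(k : ℚ_[p])‖) (hz : ‖z - (1 - q + A * (θ - 1))‖ < ‖(q : ℚ_[p]) * (θ - 1)‖) :
    ‖z - 1‖ = ‖(q : ℚ_[p])‖ := by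
  have hq₁ : ‖(q : ℚ_[p])‖ ≤ 1 := IsUltrametricDist.norm_natCast_le_one _ q
  have hA₁ : ‖A‖ ≤ 1 := by
    simpa [hA, IsUltrametricDist.norm_natCast_le_one] using
      IsUltrametricDist.norm_add_le_max (A + 1) (-1)
  rw [show z - 1 = -(q : ℚ_[p]) + ((z - (1 - q + A * (θ - 1))) + A * (θ - 1)) by ring,
    norm_add_eq_left_of_norm_lt] <;> rw [norm_neg]
  refine (IsUltrametricDist.norm_add_le_max _ _).trans_lt (max_lt ?_ ?_)
  · rw [norm_mul] at hz
    exact hz.trans_le (mul_le_of_le_one_right (norm_nonneg _) (hθ.le.trans hq₁))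
  · rw [norm_mul]
    exact (mul_le_of_le_one_left (norm_nonneg _) hA₁).trans_lt hθ

theorem norm_pottsBethe_sub_mul_eq (hp : 3 ≤ p) (hqk : ‖(q : ℚ_[p])‖ < ‖(k : ℚ_[p])‖)
    (hθ : ‖θ - 1‖ < ‖(q : ℚ_[p])‖) (hA : ‖A + 1‖ = ‖(k : ℚ_[p])‖) {x y : ℚ_[p]}
    (hx : ‖x - (1 - q + A * (θ - 1))‖ < ‖(q : ℚ_[p]) * (θ - 1)‖)
    (hy : ‖y - (1 - q + A * (θ - 1))‖ < ‖(q : ℚ_[p]) * (θ - 1)‖) :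
    ‖pottsBethe p q k θ x - pottsBethe p q k θ y‖ * ‖(k : ℚ_[p]) * (θ - 1)‖ =
      ‖(q : ℚ_[p])‖ * ‖x - y‖ := by
  have hk : 0 < ‖(k : ℚ_[p])‖ := (norm_nonneg _).trans_lt hqk
  have ht : 0 < ‖θ - 1‖ := by
    refine norm_pos_iff.mpr fun h => ?_
    simpa [h] using (norm_nonneg _).trans_lt hx
  have hD {z : ℚ_[p]} (hz : ‖z - (1 - q + A * (θ - 1))‖ < ‖(q : ℚ_[p]) * (θ - 1)‖) :
      z + θ + q - 2 ≠ 0 := by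
    rw [← norm_pos_iff, norm_add_add_sub_two_of_mem_ball hqk hA hz]
    positivity
  have hM {z : ℚ_[p]} (hz : ‖z - (1 - q + A * (θ - 1))‖ < ‖(q : ℚ_[p]) * (θ - 1)‖) :
      ‖pottsBetheMobius q θ z - 1‖ ≤ (p : ℝ)⁻¹ := by
    rw [pottsBetheMobius_sub_one (hD hz), norm_div, norm_mul,
      norm_add_add_sub_two_of_mem_ball hqk hA hz, norm_sub_one_of_mem_ball hθ hA hz, mul_comm,
      mul_div_mul_right _ _ ht.ne', div_le_iff₀ hk]
    exact Padic.norm_le_inv_mul_of_norm_lt hqk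
  rw [pottsBethe_eq_pow, pottsBethe_eq_pow,
    Padic.norm_pow_sub_pow_of_norm_sub_one_le hp (hM hx) (hM hy),
    pottsBetheMobius_sub (hD hx) (hD hy), norm_div, norm_mul, norm_mul, norm_mul, norm_mul,
    norm_add_eq_left_of_norm_lt hθ, norm_add_add_sub_two_of_mem_ball hqk hA hx,
    norm_add_add_sub_two_of_mem_ball hqk hA hy]
  field_simp

theorem norm_pottsBetheCenterCoeff_add_one (hp : 3 ≤ p) (hqk : ‖(q : ℚ_[p])‖ < ‖(k : ℚ_[p])‖) :
    ‖(pottsBetheCenterCoeff q k : ℚ_[p]) + 1‖ = ‖(k : ℚ_[p])‖ := by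
  set Q : ℚ_[p] := (q : ℚ_[p])
  set K : ℚ_[p] := (k : ℚ_[p])
  have hp₀ : (0 : ℝ) < p := Nat.cast_pos.mpr (Fact.out : p.Prime).pos
  have hK : 0 < ‖K‖ := (norm_nonneg _).trans_lt hqk
  have h₂ : ‖(2 : ℚ_[p])‖ = 1 := by
    exact_mod_cast Padic.norm_natCast_eq_one_iff.mpr
      ((Nat.coprime_primes Fact.out Nat.prime_two).mpr (by omega))
  have h₆ : (p : ℝ)⁻¹ ^ 2 < ‖(6 : ℚ_[p])‖ := by
    rw [show (6 : ℚ_[p]) = 2 * ((1 + 2 : ℕ) : ℚ_[p]) by norm_num, norm_mul, h₂, one_mul]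
    exact Padic.inv_pow_lt_norm_natCast hp 1
  have hQ : ‖Q‖ ≤ (p : ℝ)⁻¹ * ‖K‖ := Padic.norm_le_inv_mul_of_norm_lt hqk
  have hK₁ : ‖K - 1‖ ≤ 1 := by
    simpa using IsUltrametricDist.norm_intCast_le_one ℚ_[p] ((k : ℤ) - 1)
  have hK₂ : ‖K - 2‖ ≤ 1 := by
    simpa using IsUltrametricDist.norm_intCast_le_one ℚ_[p] ((k : ℤ) - 2)
  have hsmall : ‖-(Q / 2) + (K - 2) * Q ^ 2 / (6 * K)‖ < ‖K‖ := by
    refine (IsUltrametricDist.norm_add_le_max _ _).trans_lt (max_lt ?_ ?_)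
    · rwa [norm_neg, norm_div, h₂, div_one]
    rw [norm_div, norm_mul, norm_mul, norm_pow,
      div_lt_iff₀ (mul_pos ((pow_pos (inv_pos.mpr hp₀) 2).trans h₆) hK)]
    calc ‖K - 2‖ * ‖Q‖ ^ 2 ≤ ((p : ℝ)⁻¹ * ‖K‖) ^ 2 :=
          (mul_le_of_le_one_left (by positivity) hK₂).trans
            (pow_le_pow_left₀ (norm_nonneg _) hQ 2)
      _ = ‖K‖ * ((p : ℝ)⁻¹ ^ 2 * ‖K‖) := by ring
      _ < ‖K‖ * (‖(6 : ℚ_[p])‖ * ‖K‖) := by gcongr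
  rw [show (pottsBetheCenterCoeff q k : ℚ_[p]) + 1 =
      K + (K - 1) * (-(Q / 2) + (K - 2) * Q ^ 2 / (6 * K)) by rw [pottsBetheCenterCoeff]; ring]
  refine norm_add_eq_left_of_norm_lt ?_
  rw [norm_mul]
  exact (mul_le_of_le_one_left (norm_nonneg _) hK₁).trans_lt hsmall

end Expansion

theorem stmt16_general (p : ℕ) [Fact p.Prime] (hp : 3 ≤ p) (q k : ℕ)
    (θ : ℚ_[p]) (hqk : ‖(q : ℚ_[p])‖ < ‖(k : ℚ_[p])‖) (hθq : ‖θ - 1‖ < ‖(q : ℚ_[p])‖ ^ 2) :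
    ∀ x y : ℚ_[p],
      ‖x - (1 - (q : ℚ_[p]) + ((k : ℚ_[p]) - 1) *
        (1 - (q : ℚ_[p]) / 2 + ((k : ℚ_[p]) - 2) * (q : ℚ_[p]) ^ 2 / (6 * (k : ℚ_[p]))) * (θ - 1))‖
          < ‖(q : ℚ_[p]) * (θ - 1)‖ →
      ‖y - (1 - (q : ℚ_[p]) + ((k : ℚ_[p]) - 1) *
        (1 - (q : ℚ_[p]) / 2 + ((k : ℚ_[p]) - 2) * (q : ℚ_[p]) ^ 2 / (6 * (k : ℚ_[p]))) * (θ - 1))‖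
          < ‖(q : ℚ_[p]) * (θ - 1)‖ →
      ‖pottsBethe p q k θ x - pottsBethe p q k θ y‖ * ‖(k : ℚ_[p]) * (θ - 1)‖
        = ‖(q : ℚ_[p])‖ * ‖x - y‖ := by
  intro x y hx hy
  have hθ : ‖θ - 1‖ < ‖(q : ℚ_[p])‖ :=
    hθq.trans_le (pow_le_of_le_one (norm_nonneg _) (IsUltrametricDist.norm_natCast_le_one _ q)
      two_ne_zero)
  exact norm_pottsBethe_sub_mul_eq hp hqk hθ (norm_pottsBetheCenterCoeff_add_one hp hqk) hx hy

theorem stmt16 (p : ℕ) [Fact p.Prime] (hp : 3 ≤ p) (q k : ℕ) (hq : 1 ≤ q) (hk : 1 ≤ k)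
    (θ : ℚ_[p]) (hqk : ‖(q : ℚ_[p])‖ < ‖(k : ℚ_[p])‖) (hθq : ‖θ - 1‖ < ‖(q : ℚ_[p])‖ ^ 2) :
    ∀ x y : ℚ_[p],
      ‖x - (1 - (q : ℚ_[p]) + ((k : ℚ_[p]) - 1) *
        (1 - (q : ℚ_[p]) / 2 + ((k : ℚ_[p]) - 2) * (q : ℚ_[p]) ^ 2 / (6 * (k : ℚ_[p]))) * (θ - 1))‖
          < ‖(q : ℚ_[p]) * (θ - 1)‖ →
      ‖y - (1 - (q : ℚ_[p]) + ((k : ℚ_[p]) - 1) *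
        (1 - (q : ℚ_[p]) / 2 + ((k : ℚ_[p]) - 2) * (q : ℚ_[p]) ^ 2 / (6 * (k : ℚ_[p]))) * (θ - 1))‖
          < ‖(q : ℚ_[p]) * (θ - 1)‖ →
      ‖pottsBethe p q k θ x - pottsBethe p q k θ y‖ * ‖(k : ℚ_[p]) * (θ - 1)‖
        = ‖(q : ℚ_[p])‖ * ‖x - y‖ :=
  stmt16_general p hp q k θ hqk hθq
end
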